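/- In the ring R, the identity x*w6^(q^2) + x^(q^2)*w6 = ((w4^q)^(3q0)*x + w6)*ℓ^q + (w4^(3q0)*x + w6)*ℓ - x*w6 holds. -/
import Mathlib


noncomputable section

open MvPolynomial

abbrev F := ZMod 3

def q0 (s : ℕ) : ℕ := 3 ^ s
def q (s : ℕ) : ℕ := 3 ^ (2 * s + 1)

def ReeIdeal (s : ℕ) : Ideal (MvPolynomial (Fin 3) F) :=
  Ideal.span
    { X 1 ^ q s - X 1 - X 0 ^ q0 s * (X 0 ^ q s - X 0),
      X 2 ^ q s - X 2 - X 0 ^ q0 s * (X 1 ^ q s - X 1) }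

abbrev R (s : ℕ) : Type := MvPolynomial (Fin 3) F ⧸ ReeIdeal s

def x (s : ℕ) : R s := Ideal.Quotient.mk _ (X 0)
def y (s : ℕ) : R s := Ideal.Quotient.mk _ (X 1)
def z (s : ℕ) : R s := Ideal.Quotient.mk _ (X 2)

def w1 (s : ℕ) : R s := x s ^ (3 * q0 s + 1) - y s ^ (3 * q0 s)
def w2 (s : ℕ) : R s := x s * y s ^ (3 * q0 s) - z s ^ (3 * q0 s)
def w3 (s : ℕ) : R s := x s * z s ^ (3 * q0 s) - w1 s ^ (3 * q0 s)
def w4 (s : ℕ) : R s := x s * w2 s ^ q0 s - y s * w1 s ^ q0 s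
def v (s : ℕ) : R s := x s * w3 s ^ q0 s - z s * w1 s ^ q0 s
def w5 (s : ℕ) : R s := y s * w3 s ^ q0 s - z s * w2 s ^ q0 s
def w6 (s : ℕ) : R s := v s ^ (3 * q0 s) - w2 s ^ (3 * q0 s) + x s * w4 s ^ (3 * q0 s)
def w7 (s : ℕ) : R s := w2 s + v s
def w8 (s : ℕ) : R s := w5 s ^ (3 * q0 s) + x s * w7 s ^ (3 * q0 s)
def w9 (s : ℕ) : R s := w4 s * w2 s ^ q0 s - y s * w6 s ^ q0 s
def w10 (s : ℕ) : R s := z s * w6 s ^ q0 s - w3 s ^ q0 s * w4 s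
def ell (s : ℕ) : R s := x s ^ q s - x s


set_option synthInstance.maxHeartbeats 1000000
set_option maxHeartbeats 1000000

-- auxiliary
instance instCharPR (s : ℕ) : CharP (R s) 3 := by
  apply CharP.quotient'
  intro a ha
  have hle : ReeIdeal s ≤ RingHom.ker ((eval (fun _ => (0:F))) : MvPolynomial (Fin 3) F →+* F) := by
    rw [ReeIdeal, Ideal.span_le]
    intro p hp
    simp only [Set.mem_insert_iff, Set.mem_singleton_iff] at hp
    have hq : q s ≠ 0 := by rw [q]; positivity
    have hq0 : q0 s ≠ 0 := by rw [q0]; positivity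
    rcases hp with rfl | rfl <;>
      simp [RingHom.mem_ker, zero_pow hq, zero_pow hq0]
  have h2 := hle ha
  rw [RingHom.mem_ker, map_natCast] at h2
  rw [show ((a : MvPolynomial (Fin 3) F)) = C ((a : F)) from (map_natCast C a).symm, h2, map_zero]

instance (s : ℕ) : ExpChar (R s) 3 := ExpChar.prime Nat.prime_three

def Phi (s : ℕ) : R s →+* R s := iterateFrobenius (R s) 3 (2*s+1)

lemma Phi_apply (s : ℕ) (a : R s) : Phi s a = a ^ q s := rfl

lemma e1 (s : ℕ) : q0 s * (3 * q0 s) = q s := by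
  rw [q0, q, two_mul, pow_succ, pow_add]; ring

lemma e2 (s : ℕ) : (3 * q0 s) * q0 s = q s := by rw [mul_comm, e1]

lemma e3 (s : ℕ) : (3 * q0 s) * (3 * q0 s) = q s * 3 := by
  rw [q0, q, two_mul, pow_succ, pow_add]; ring

lemma tq0_eq (s : ℕ) : 3 * q0 s = 3 ^ (s + 1) := by rw [q0, pow_succ, mul_comm]

lemma padd3 (s : ℕ) (a b : R s) : (a + b) ^ (3 * q0 s) = a ^ (3 * q0 s) + b ^ (3 * q0 s) := by
  rw [tq0_eq]; exact add_pow_char_pow a b 3 (s+1)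

lemma psub3 (s : ℕ) (a b : R s) : (a - b) ^ (3 * q0 s) = a ^ (3 * q0 s) - b ^ (3 * q0 s) := by
  rw [tq0_eq]; exact sub_pow_char_pow a b (s+1)

lemma padd0 (s : ℕ) (a b : R s) : (a + b) ^ (q0 s) = a ^ (q0 s) + b ^ (q0 s) := by
  rw [q0]; exact add_pow_char_pow a b 3 s

lemma psub0 (s : ℕ) (a b : R s) : (a - b) ^ (q0 s) = a ^ (q0 s) - b ^ (q0 s) := by
  rw [q0]; exact sub_pow_char_pow a b s

lemma paddq (s : ℕ) (a b : R s) : (a + b) ^ (q s) = a ^ (q s) + b ^ (q s) := by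
  rw [q]; exact add_pow_char_pow a b 3 (2*s+1)

lemma psubq (s : ℕ) (a b : R s) : (a - b) ^ (q s) = a ^ (q s) - b ^ (q s) := by
  rw [q]; exact sub_pow_char_pow a b (2*s+1)

lemma cube (s : ℕ) (a b : R s) : (a + b) ^ 3 = a ^ 3 + b ^ 3 := add_pow_char a b 3

lemma c1 (s : ℕ) (a : R s) : (a ^ q0 s) ^ (3 * q0 s) = a ^ q s := by rw [← pow_mul, e1]

lemma c2 (s : ℕ) (a : R s) : (a ^ (3 * q0 s)) ^ q0 s = a ^ q s := by rw [← pow_mul, e2]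

lemma c3 (s : ℕ) (a : R s) : (a ^ (3 * q0 s)) ^ (3 * q0 s) = (a ^ q s) ^ 3 := by
  rw [← pow_mul, ← pow_mul, e3]

lemma c4 (s : ℕ) : ((x s ^ q0 s) ^ 2) ^ (3 * q0 s) = (x s ^ q s) ^ 2 := by
  rw [pow_right_comm, c1]

lemma h30 (s : ℕ) : (3 : R s) = 0 := by exact_mod_cast CharP.cast_eq_zero (R s) 3

lemma hx (s : ℕ) : x s ^ q s = x s + ell s := by rw [ell]; ring

lemma hy (s : ℕ) : y s ^ q s = y s + x s ^ q0 s * ell s := by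
  have hm : (X 1 ^ q s - X 1 - X 0 ^ q0 s * (X 0 ^ q s - X 0) : MvPolynomial (Fin 3) F) ∈ ReeIdeal s :=
    Ideal.subset_span (Set.mem_insert _ _)
  have h := (Ideal.Quotient.eq_zero_iff_mem).2 hm
  rw [map_sub, map_sub, map_mul, map_pow, map_pow, map_sub, map_pow] at h
  unfold ell y x
  linear_combination h

lemma hz (s : ℕ) : z s ^ q s = z s + x s ^ q0 s * (x s ^ q0 s * ell s) := by
  have hm : (X 2 ^ q s - X 2 - X 0 ^ q0 s * (X 1 ^ q s - X 1) : MvPolynomial (Fin 3) F) ∈ ReeIdeal s :=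
    Ideal.subset_span (Set.mem_insert_of_mem _ rfl)
  have h := (Ideal.Quotient.eq_zero_iff_mem).2 hm
  rw [map_sub, map_sub, map_mul, map_pow, map_pow, map_sub, map_pow] at h
  have h' := hy s
  simp only [ell, z, y, x] at h' ⊢
  linear_combination h + (Ideal.Quotient.mk (ReeIdeal s) (X 0) : R s) ^ q0 s * h'

lemma h1 (s : ℕ) : w1 s ^ q s = w1 s + x s ^ (3 * q0 s) * ell s := by
  have e : w1 s ^ q s = (x s ^ q s) ^ (3 * q0 s) * (x s ^ q s) - (y s ^ q s) ^ (3 * q0 s) := by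
    rw [show w1 s ^ q s = Phi s (w1 s) from rfl, w1]
    simp only [map_sub, map_pow, Phi_apply]
    rw [pow_succ]
  rw [e, hx, hy, padd3, padd3, mul_pow, c1, hx, w1]
  ring

lemma h2 (s : ℕ) : w2 s ^ q s = w2 s + y s ^ (3 * q0 s) * ell s := by
  have e : w2 s ^ q s = (x s ^ q s) * (y s ^ q s) ^ (3 * q0 s) - (z s ^ q s) ^ (3 * q0 s) := by
    rw [show w2 s ^ q s = Phi s (w2 s) from rfl, w2]
    simp only [map_sub, map_mul, map_pow, Phi_apply]
  rw [e, hx, hy, hz]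
  simp only [padd3, mul_pow, c1, hx]
  rw [w2]; ring

lemma h3 (s : ℕ) : w3 s ^ q s = w3 s + z s ^ (3 * q0 s) * ell s := by
  have e : w3 s ^ q s = (x s ^ q s) * (z s ^ q s) ^ (3 * q0 s) - (w1 s ^ q s) ^ (3 * q0 s) := by
    rw [show w3 s ^ q s = Phi s (w3 s) from rfl, w3]
    simp only [map_sub, map_mul, map_pow, Phi_apply]
  rw [e, hx, hz, h1]
  simp only [padd3, mul_pow, c1, c3, hx, cube]
  rw [w3]
  linear_combination (x s ^ 2 * ell s + x s * ell s ^ 2) * ell s ^ (3 * q0 s) * h30 s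

lemma h4 (s : ℕ) : w4 s ^ q s
    = w4 s + (w2 s ^ q0 s - x s ^ q0 s * w1 s ^ q0 s) * ell s := by
  have e : w4 s ^ q s = (x s ^ q s) * (w2 s ^ q s) ^ q0 s - (y s ^ q s) * (w1 s ^ q s) ^ q0 s := by
    rw [show w4 s ^ q s = Phi s (w4 s) from rfl, w4]
    simp only [map_sub, map_mul, map_pow, Phi_apply]
  rw [e, hx, hy, h1, h2]
  simp only [padd0, mul_pow, c2, hx, hy]
  rw [w4]; ring

lemma h5 (s : ℕ) : v s ^ q s
    = v s + (w3 s ^ q0 s - (x s ^ q0 s) ^ 2 * w1 s ^ q0 s) * ell s := by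
  have e : v s ^ q s = (x s ^ q s) * (w3 s ^ q s) ^ q0 s - (z s ^ q s) * (w1 s ^ q s) ^ q0 s := by
    rw [show v s ^ q s = Phi s (v s) from rfl, v]
    simp only [map_sub, map_mul, map_pow, Phi_apply]
  rw [e, hx, hz, h1, h3]
  simp only [padd0, mul_pow, c2, hx, hz]
  rw [v]; ring

lemma hB (s : ℕ) : w3 s + x s * w2 s + x s ^ 2 * w1 s = y s ^ 3 := by
  rw [w3, w2, w1, pow_succ, psub3]
  simp only [mul_pow, c3, hx, hy, cube]
  ring

lemma hA (s : ℕ) : w3 s ^ q s + x s ^ q s * w2 s ^ q s + (x s ^ q s) ^ 2 * w1 s ^ q s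
    = (y s ^ q s) ^ 3 := by
  have h := congrArg (Phi s) (hB s)
  simpa only [map_add, map_mul, map_pow, Phi_apply] using h

lemma h6 (s : ℕ) : w6 s ^ q s = w6 s + w4 s ^ (3 * q0 s) * ell s := by
  have e : w6 s ^ q s = (v s ^ q s) ^ (3 * q0 s) - (w2 s ^ q s) ^ (3 * q0 s)
      + (x s ^ q s) * (w4 s ^ q s) ^ (3 * q0 s) := by
    rw [show w6 s ^ q s = Phi s (w6 s) from rfl, w6]
    simp only [map_add, map_sub, map_mul, map_pow, Phi_apply]
  rw [e, h5, h2, h4]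
  simp only [padd3, psub3, mul_pow, c1, c3, c4]
  rw [w6]
  linear_combination ell s ^ (3 * q0 s) * hA s + w4 s ^ (3 * q0 s) * hx s
    - ell s ^ (3 * q0 s) * (x s ^ q s) ^ 2 * w1 s ^ q s * h30 s

lemma pc (s : ℕ) (a : R s) : a ^ (q s ^ 2) = (a ^ q s) ^ q s := by rw [← pow_mul, sq]

theorem stmt2 (s : ℕ) (hs : 1 ≤ s) :
    x s * w6 s ^ (q s ^ 2) + x s ^ (q s ^ 2) * w6 s
      = ((w4 s ^ q s) ^ (3 * q0 s) * x s + w6 s) * ell s ^ q s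
        + (w4 s ^ (3 * q0 s) * x s + w6 s) * ell s - x s * w6 s := by
  have h6q := congrArg (Phi s) (h6 s)
  simp only [map_add, map_mul, map_pow, Phi_apply] at h6q
  rw [pc s (w6 s), pc s (x s), h6q, h6, hx, paddq, hx]
  linear_combination x s * w6 s * h30 s
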